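/- Let Φ be a finite root system in a real inner product space V and n ≥ 1. The n-level Weyl group W_n(Φ), generated by the reflections s_{a,k} for a ∈ Φ and k ∈ ℤⁿ (embedded in the ordered field ⁿ*ℝ via magnitude-independent generators ω_1,…,ω_n), is isomorphic to the semidirect product W(Φ) ⋉ ℤⁿ(Φ^∨), where ℤⁿ(Φ^∨) is the group of translations by ℤⁿ-linear combinations of coroots. -/

import Mathlib

/-!
Write `a^∨ = 2a/(a,a)` and `τ_t` for the translation `v ↦ v + t`. Then
`s_{a,k} = τ_{k a^∨} ∘ s_{a,0}`, so `W_n(Φ)` is generated by `W(Φ)` and the translation group `T`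
of the coroot lattice. By the crystallographic condition and symmetry of the form,
`s_{a,0}(k b^∨) = k b^∨ - (m k) a^∨` with `m = 2(a,b)/(b,b) ∈ ℤ`, so every element of `W(Φ)` is an
additive map preserving the lattice; such a map `w` satisfies `w τ_t w⁻¹ = τ_{w t}`, hence `W(Φ)`
normalizes `T` and `W_n(Φ) = T · W(Φ)`. An additive map fixes `0` while `τ_t` moves it to `t`,
so `W(Φ) ∩ T = 1`.
-/

noncomputable section

variable {R : Type*} [Field R] [LinearOrder R] [IsStrictOrderedRing R]
variable {V : Type*} [AddCommGroup V] [Module R V]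

/-- The hyper-affine reflection `s_{a,k} : v ↦ v − (2(B a v − k)/(B a a)) • a`,
as a permutation of `V` (it is an involution). -/
def hyperAffineRefl (B : V →ₗ[R] V →ₗ[R] R) (a : V) (k : R) : Equiv.Perm V where
  toFun v := v - (2 * (B a v - k) / B a a) • a
  invFun v := v - (2 * (B a v - k) / B a a) • a
  left_inv := fun v => by
    by_cases h : B a a = 0
    · simp [h]
    · simp only [map_sub, map_smul, smul_eq_mul]
      rw [show 2 * (B a v - 2 * (B a v - k) / B a a * B a a - k) / B a a
          = -(2 * (B a v - k) / B a a) by field_simp; ring]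
      rw [neg_smul, sub_neg_eq_add, sub_add_cancel]
  right_inv := fun v => by
    by_cases h : B a a = 0
    · simp [h]
    · simp only [map_sub, map_smul, smul_eq_mul]
      rw [show 2 * (B a v - 2 * (B a v - k) / B a a * B a a - k) / B a a
          = -(2 * (B a v - k) / B a a) by field_simp; ring]
      rw [neg_smul, sub_neg_eq_add, sub_add_cancel]

/-- The `n`-level Weyl group `W_n(Φ)`: the subgroup of `Perm V` generated by the
reflections `s_{a,k}` for `a ∈ Φ` and `k` in the value group `Λ` (modeling `ℤⁿ ⊂ ⁿ*ℝ`). -/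
def nLevelWeylGroup (B : V →ₗ[R] V →ₗ[R] R) (Φ : Finset V) (Λ : AddSubgroup R) :
    Subgroup (Equiv.Perm V) :=
  Subgroup.closure {g | ∃ a ∈ Φ, ∃ k ∈ Λ, g = hyperAffineRefl B a k}

/-- The finite Weyl group `W(Φ)`, generated by the linear reflections `s_{a,0}`. -/
def finiteWeylGroup (B : V →ₗ[R] V →ₗ[R] R) (Φ : Finset V) : Subgroup (Equiv.Perm V) :=
  Subgroup.closure {g | ∃ a ∈ Φ, g = hyperAffineRefl B a 0}

/-- The coroot lattice `Λ(Φ^∨)`: the additive subgroup of `V` generated by the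
`Λ`-multiples of the coroots `2a/(a,a)`. -/
def corootLattice (B : V →ₗ[R] V →ₗ[R] R) (Φ : Finset V) (Λ : AddSubgroup R) :
    AddSubgroup V :=
  AddSubgroup.closure {x | ∃ a ∈ Φ, ∃ k ∈ Λ, x = (2 * k / B a a) • a}

/-- The translation subgroup of `Perm V` by vectors of the coroot lattice. -/
def translationSubgroup (B : V →ₗ[R] V →ₗ[R] R) (Φ : Finset V) (Λ : AddSubgroup R) :
    Subgroup (Equiv.Perm V) where
  carrier := {g | ∃ t ∈ corootLattice B Φ Λ, ∀ v : V, g v = v + t}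
  one_mem' := ⟨0, (corootLattice B Φ Λ).zero_mem, by intro v; simp⟩
  mul_mem' := by
    rintro g h ⟨t, ht, hg⟩ ⟨s, hs, hh⟩
    exact ⟨s + t, add_mem hs ht, fun v => by
      rw [Equiv.Perm.mul_apply, hh, hg, add_assoc]⟩
  inv_mem' := by
    rintro g ⟨t, ht, hg⟩
    refine ⟨-t, neg_mem ht, fun v => ?_⟩
    have h1 : g (v + -t) = v := by rw [hg]; abel
    nth_rewrite 1 [← h1]
    exact g.symm_apply_apply _

lemma Subgroup.le_normalizer_of_conj_mem {G : Type*} [Group G] {H K : Subgroup G}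
    (hK : ∀ g ∈ K, ∀ h ∈ H, g * h * g⁻¹ ∈ H) : K ≤ Subgroup.normalizer (H : Set G) := fun g hg =>
  Subgroup.mem_normalizer_iff.mpr fun h =>
    ⟨hK g hg h, fun hc => by simpa [mul_assoc] using hK g⁻¹ (inv_mem hg) _ hc⟩

lemma Equiv.addRight_mem_of_mem_closure {G : Subgroup (Equiv.Perm V)} {s : Set V}
    (hs : ∀ t ∈ s, Equiv.addRight t ∈ G) {t : V} (ht : t ∈ AddSubgroup.closure s) :
    Equiv.addRight t ∈ G := by
  induction ht using AddSubgroup.closure_induction with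
  | mem t ht => exact hs t ht
  | zero => simp [G.one_mem]
  | add x y _ _ hx hy =>
    convert G.mul_mem hy hx using 1
    ext v; simp [add_assoc]
  | neg x _ hx =>
    convert G.inv_mem hx using 1
    ext v; simp

lemma Equiv.Perm.mul_addRight_mul_inv {g : Equiv.Perm V} (hg : ∀ x y, g (x + y) = g x + g y)
    (t : V) : g * Equiv.addRight t * g⁻¹ = Equiv.addRight (g t) := by
  ext v; simp [hg]

def latticeAutomorphisms (L : AddSubgroup V) : Subgroup (Equiv.Perm V) where
  carrier := {g | (∀ x y, g (x + y) = g x + g y) ∧ ∀ t, g t ∈ L ↔ t ∈ L}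
  one_mem' := ⟨fun _ _ => rfl, fun _ => Iff.rfl⟩
  mul_mem' := by
    rintro g h ⟨hg_add, hg_mem⟩ ⟨hh_add, hh_mem⟩
    exact ⟨fun x y => by simp [hg_add, hh_add], fun t => by simp [hg_mem, hh_mem]⟩
  inv_mem' := by
    rintro g ⟨hg_add, hg_mem⟩
    refine ⟨fun x y => g.injective ?_, fun t => ?_⟩
    · simp [hg_add]
    · rw [← hg_mem]; simp

section TranslationSubgroup

variable {K E : Type*} [Field K] [AddCommGroup E] [Module K E]
variable {B : E →ₗ[K] E →ₗ[K] K} {Φ : Finset E} {Λ : AddSubgroup K}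

lemma mem_translationSubgroup_iff {g : Equiv.Perm E} :
    g ∈ translationSubgroup B Φ Λ ↔ ∃ t ∈ corootLattice B Φ Λ, Equiv.addRight t = g := by
  simp only [translationSubgroup, Subgroup.mem_mk, Submonoid.mem_mk, Subsemigroup.mem_mk,
    Set.mem_ofPred_eq, Equiv.ext_iff, Equiv.coe_addRight, eq_comm]

lemma latticeAutomorphisms_le_normalizer_translationSubgroup :
    latticeAutomorphisms (corootLattice B Φ Λ) ≤
      Subgroup.normalizer (translationSubgroup B Φ Λ : Set (Equiv.Perm E)) := by
  refine Subgroup.le_normalizer_of_conj_mem fun g ⟨hg_add, hg_mem⟩ h hh => ?_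
  obtain ⟨t, ht, rfl⟩ := mem_translationSubgroup_iff.mp hh
  exact mem_translationSubgroup_iff.mpr
    ⟨g t, (hg_mem t).mpr ht, (Equiv.Perm.mul_addRight_mul_inv hg_add t).symm⟩

lemma latticeAutomorphisms_inf_translationSubgroup :
    latticeAutomorphisms (corootLattice B Φ Λ) ⊓ translationSubgroup B Φ Λ = ⊥ := by
  refine eq_bot_iff.mpr fun g ⟨⟨hg_add, _⟩, hg⟩ => ?_
  obtain ⟨t, -, rfl⟩ := mem_translationSubgroup_iff.mp hg
  have ht : t = 0 := by simpa using hg_add 0 0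
  simp [ht]

end TranslationSubgroup

section Reflections

variable (B : V →ₗ[R] V →ₗ[R] R)

lemma hyperAffineRefl_apply (a : V) (k : R) (v : V) :
    hyperAffineRefl B a k v = v - (2 * (B a v - k) / B a a) • a := rfl

lemma hyperAffineRefl_involutive (a : V) (k : R) :
    Function.Involutive (hyperAffineRefl B a k) :=
  (hyperAffineRefl B a k).symm_apply_apply

lemma hyperAffineRefl_add_apply (a x y : V) :
    hyperAffineRefl B a 0 (x + y) = hyperAffineRefl B a 0 x + hyperAffineRefl B a 0 y := by
  simp only [hyperAffineRefl_apply, map_add, sub_zero, mul_add, add_div, add_smul]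
  abel

lemma addRight_mul_hyperAffineRefl_zero (a : V) (k : R) :
    Equiv.addRight ((2 * k / B a a) • a) * hyperAffineRefl B a 0 = hyperAffineRefl B a k := by
  ext v
  simp only [Equiv.Perm.mul_apply, hyperAffineRefl_apply, Equiv.coe_addRight, mul_sub,
    sub_div, sub_smul, sub_zero]
  abel

lemma hyperAffineRefl_zero_smul_coroot {a b : V} (hbb : B b b ≠ 0) {m : ℤ}
    (hab : B a b = B b a) (hm : 2 * B b a = m * B b b) (k : R) :
    hyperAffineRefl B a 0 ((2 * k / B b b) • b) =
      (2 * k / B b b) • b - (2 * (m * k) / B a a) • a := by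
  have hpair : B a ((2 * k / B b b) • b) = m * k := by
    rw [map_smul, smul_eq_mul, hab]
    field_simp
    linear_combination k * hm
  rw [hyperAffineRefl_apply, hpair, sub_zero]

end Reflections

section WeylGroups

variable (B : V →ₗ[R] V →ₗ[R] R) (Φ : Finset V) (Λ : AddSubgroup R)

lemma finiteWeylGroup_le_nLevelWeylGroup : finiteWeylGroup B Φ ≤ nLevelWeylGroup B Φ Λ :=
  Subgroup.closure_mono fun _ ⟨a, ha, hg⟩ => ⟨a, ha, 0, Λ.zero_mem, hg⟩

lemma translationSubgroup_le_nLevelWeylGroup :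
    translationSubgroup B Φ Λ ≤ nLevelWeylGroup B Φ Λ := by
  intro g hg
  obtain ⟨t, ht, rfl⟩ := mem_translationSubgroup_iff.mp hg
  refine Equiv.addRight_mem_of_mem_closure ?_ ht
  rintro _ ⟨a, ha, k, hk, rfl⟩
  rw [eq_mul_inv_of_mul_eq (addRight_mul_hyperAffineRefl_zero B a k)]
  exact mul_mem (Subgroup.subset_closure ⟨a, ha, k, hk, rfl⟩)
    (inv_mem (Subgroup.subset_closure ⟨a, ha, 0, Λ.zero_mem, rfl⟩))

lemma nLevelWeylGroup_le_finiteWeylGroup_sup :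
    nLevelWeylGroup B Φ Λ ≤ finiteWeylGroup B Φ ⊔ translationSubgroup B Φ Λ := by
  refine Subgroup.closure_le _ |>.mpr ?_
  rintro _ ⟨a, ha, k, hk, rfl⟩
  rw [← addRight_mul_hyperAffineRefl_zero]
  exact mul_mem
    (Subgroup.mem_sup_right (mem_translationSubgroup_iff.mpr
      ⟨_, AddSubgroup.subset_closure ⟨a, ha, k, hk, rfl⟩, rfl⟩))
    (Subgroup.mem_sup_left (Subgroup.subset_closure ⟨a, ha, rfl⟩))

variable {B Φ Λ}

lemma hyperAffineRefl_zero_mem_corootLattice (hsymm : ∀ u v : V, B u v = B v u)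
    (hcrys : ∀ a ∈ Φ, ∀ b ∈ Φ, ∃ m : ℤ, 2 * B a b = (m : R) * B a a) {a t : V} (ha : a ∈ Φ)
    (ht : t ∈ corootLattice B Φ Λ) : hyperAffineRefl B a 0 t ∈ corootLattice B Φ Λ := by
  let f : V →+ V := AddMonoidHom.mk' (hyperAffineRefl B a 0) (hyperAffineRefl_add_apply B a)
  suffices corootLattice B Φ Λ ≤ (corootLattice B Φ Λ).comap f from this ht
  refine (AddSubgroup.closure_le (corootLattice B Φ Λ |>.comap f)).mpr ?_
  rintro _ ⟨b, hb, k, hk, rfl⟩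
  change hyperAffineRefl B a 0 _ ∈ corootLattice B Φ Λ
  rcases eq_or_ne (B b b) 0 with hbb | hbb
  · -- division by zero makes this generator `0`
    simp [hbb, hyperAffineRefl_apply]
  obtain ⟨m, hm⟩ := hcrys b hb a ha
  rw [hyperAffineRefl_zero_smul_coroot B hbb (hsymm a b) hm]
  exact sub_mem (AddSubgroup.subset_closure ⟨b, hb, k, hk, rfl⟩)
    (AddSubgroup.subset_closure ⟨a, ha, m • k, Λ.zsmul_mem hk m, by rw [zsmul_eq_mul]⟩)

lemma finiteWeylGroup_le_latticeAutomorphisms (hsymm : ∀ u v : V, B u v = B v u)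
    (hcrys : ∀ a ∈ Φ, ∀ b ∈ Φ, ∃ m : ℤ, 2 * B a b = (m : R) * B a a) :
    finiteWeylGroup B Φ ≤ latticeAutomorphisms (corootLattice B Φ Λ) := by
  refine Subgroup.closure_le _ |>.mpr ?_
  rintro _ ⟨a, ha, rfl⟩
  refine ⟨hyperAffineRefl_add_apply B a, fun t => ⟨fun h => ?_,
    hyperAffineRefl_zero_mem_corootLattice hsymm hcrys ha⟩⟩
  simpa [hyperAffineRefl_involutive B a 0 t] using
    hyperAffineRefl_zero_mem_corootLattice hsymm hcrys ha h

end WeylGroups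

theorem nLevelWeylGroup_eq_semidirect_general
    (B : V →ₗ[R] V →ₗ[R] R)
    (hsymm : ∀ u v : V, B u v = B v u)
    (Φ : Finset V) (Λ : AddSubgroup R)
    -- crystallographic condition: `2(a,b)/(a,a)` is an integer
    (hcrys : ∀ a ∈ Φ, ∀ b ∈ Φ, ∃ m : ℤ, 2 * B a b = (m : R) * B a a) :
    translationSubgroup B Φ Λ ≤ nLevelWeylGroup B Φ Λ ∧
    finiteWeylGroup B Φ ≤ nLevelWeylGroup B Φ Λ ∧
    (∀ g ∈ nLevelWeylGroup B Φ Λ, ∀ h ∈ translationSubgroup B Φ Λ,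
      g * h * g⁻¹ ∈ translationSubgroup B Φ Λ) ∧
    finiteWeylGroup B Φ ⊓ translationSubgroup B Φ Λ = ⊥ ∧
    finiteWeylGroup B Φ ⊔ translationSubgroup B Φ Λ = nLevelWeylGroup B Φ Λ ∧
    (∀ g ∈ nLevelWeylGroup B Φ Λ,
      ∃ t ∈ translationSubgroup B Φ Λ, ∃ w ∈ finiteWeylGroup B Φ, g = t * w) := by
  have hW_aut := finiteWeylGroup_le_latticeAutomorphisms (Λ := Λ) hsymm hcrys
  have hW_norm := hW_aut.trans latticeAutomorphisms_le_normalizer_translationSubgroup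
  have hsup : finiteWeylGroup B Φ ⊔ translationSubgroup B Φ Λ = nLevelWeylGroup B Φ Λ :=
    le_antisymm (sup_le (finiteWeylGroup_le_nLevelWeylGroup B Φ Λ)
      (translationSubgroup_le_nLevelWeylGroup B Φ Λ)) (nLevelWeylGroup_le_finiteWeylGroup_sup B Φ Λ)
  refine ⟨translationSubgroup_le_nLevelWeylGroup B Φ Λ, finiteWeylGroup_le_nLevelWeylGroup B Φ Λ,
    fun g hg h hh => ?_, ?_, hsup, fun g hg => ?_⟩
  · have hg_norm := sup_le hW_norm Subgroup.le_normalizer (hsup ▸ hg)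
    exact (Subgroup.mem_normalizer_iff.mp hg_norm h).mp hh
  · exact eq_bot_iff.mpr <| (inf_le_inf_right _ hW_aut).trans
      latticeAutomorphisms_inf_translationSubgroup.le
  · rw [← hsup, sup_comm, ← SetLike.mem_coe,
      Subgroup.coe_mul_of_right_le_normalizer_left _ _ hW_norm] at hg
    obtain ⟨t, ht, w, hw, rfl⟩ := hg
    exact ⟨t, ht, w, hw, rfl⟩

/-- Let `Φ` be a finite root system in an inner product space over the
linearly ordered field `R` (modeling `ⁿ*ℝ`, with value group `Λ ≅ ℤⁿ` embedded via the
magnitude-independent `ω_1, …, ω_n`).  Then the `n`-level Weyl group `W_n(Φ)` decomposes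
as the (internal) semidirect product `W(Φ) ⋉ Λ(Φ^∨)`: the translation subgroup
`T = Λ(Φ^∨)` is contained in `W_n(Φ)` and normalized by it, `W(Φ) ∩ T = 1`,
`W(Φ) ⊔ T = W_n(Φ)`, and every element of `W_n(Φ)` factors as a translation times an
element of `W(Φ)`. -/
theorem nLevelWeylGroup_eq_semidirect
    (B : V →ₗ[R] V →ₗ[R] R)
    (hsymm : ∀ u v : V, B u v = B v u)
    (hpos : ∀ v : V, v ≠ 0 → 0 < B v v)
    (Φ : Finset V) (Λ : AddSubgroup R)
    (h0 : ∀ a ∈ Φ, a ≠ 0)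
    -- `Φ` is closed under its reflections
    (hrefl : ∀ a ∈ Φ, ∀ b ∈ Φ, hyperAffineRefl B a (0 : R) b ∈ Φ)
    -- crystallographic condition: `2(a,b)/(a,a)` is an integer
    (hcrys : ∀ a ∈ Φ, ∀ b ∈ Φ, ∃ m : ℤ, 2 * B a b = (m : R) * B a a) :
    translationSubgroup B Φ Λ ≤ nLevelWeylGroup B Φ Λ ∧
    finiteWeylGroup B Φ ≤ nLevelWeylGroup B Φ Λ ∧
    (∀ g ∈ nLevelWeylGroup B Φ Λ, ∀ h ∈ translationSubgroup B Φ Λ,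
      g * h * g⁻¹ ∈ translationSubgroup B Φ Λ) ∧
    finiteWeylGroup B Φ ⊓ translationSubgroup B Φ Λ = ⊥ ∧
    finiteWeylGroup B Φ ⊔ translationSubgroup B Φ Λ = nLevelWeylGroup B Φ Λ ∧
    (∀ g ∈ nLevelWeylGroup B Φ Λ,
      ∃ t ∈ translationSubgroup B Φ Λ, ∃ w ∈ finiteWeylGroup B Φ, g = t * w) :=
  nLevelWeylGroup_eq_semidirect_general B hsymm Φ Λ hcrys
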